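/- arXiv:math/0212113 — 2 statements merged into one kernel-verified Lean document; each statement's English description precedes it below -/
import Mathlib

section
/- For the function F(z) = |z|^{p-1} z on the complex numbers with p > 1, and with θ := min(p-1, 1), the derivative components F_z(z) = ((p+1)/2)|z|^{p-1} and F_{z̄}(z) = ((p-1)/2)|z|^{p-3} z² satisfy the Hölder continuity estimate |F'(z) - F'(w)| ≤ C |z - w|^θ (|z|^{p-1-θ} + |w|^{p-1-θ}) for all complex z, w, where C depends only on p. -/
/-!
Write `z = ‖z‖ ζ` with `ζ = normalize z` and put `s = p - 1`. Then `F_z = (p+1)/2 ‖z‖^s` and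
`F_{z̄} = (p-1)/2 ‖z‖^s ζ²`, so `F'(z) - F'(w)` is controlled by the radial difference
`|‖z‖^s - ‖w‖^s|` and by the angular terms `‖z‖^s ‖ζ - ω‖`, `‖w‖^s ‖ζ - ω‖`. The radial difference
is at most `(‖z‖ - ‖w‖)^s` for `s ≤ 1` and at most `s ‖z‖^(s-1) (‖z‖ - ‖w‖)` for `s ≥ 1`
(Bernoulli), while `‖z‖ ‖ζ - ω‖ ≤ min (2‖z‖) (2‖z - w‖)`. In every case the interpolation
`min A δ ≤ δ^θ A^(1-θ)` produces the factor `‖z - w‖^θ`.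
-/

noncomputable section

/-- The Wirtinger derivative `F_z` of `F(z) = |z|^(p-1) z`. -/
def Fz (p : ℝ) (z : ℂ) : ℂ := (((p + 1) / 2 * ‖z‖ ^ (p - 1) : ℝ) : ℂ)

/-- The Wirtinger derivative `F_{z̄}` of `F(z) = |z|^(p-1) z` (interpreted as `0` at `z = 0`). -/
def Fzbar (p : ℝ) (z : ℂ) : ℂ := (((p - 1) / 2 * ‖z‖ ^ (p - 3) : ℝ) : ℂ) * z ^ 2

/-- The Euclidean norm of the pair `F'(z) - F'(w) = (F_z z - F_z w, F_{z̄} z - F_{z̄} w)`. -/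
def FderivDist (p : ℝ) (z w : ℂ) : ℝ :=
  Real.sqrt (‖Fz p z - Fz p w‖ ^ 2 + ‖Fzbar p z - Fzbar p w‖ ^ 2)

namespace Real

lemma rpow_le_rpow_mul_rpow_sub {x d a θ r : ℝ} (hx : 0 ≤ x) (hxd : x ≤ d) (hxa : x ≤ a)
    (hθ : 0 ≤ θ) (hθr : θ ≤ r) : x ^ r ≤ d ^ θ * a ^ (r - θ) :=
  calc x ^ r = x ^ θ * x ^ (r - θ) := by
        rw [← rpow_add_of_nonneg hx hθ (sub_nonneg.2 hθr), add_sub_cancel]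
    _ ≤ d ^ θ * a ^ (r - θ) := by
        gcongr
        exact rpow_nonneg (hx.trans hxd) θ

lemma rpow_sub_rpow_le_rpow_sub {s a b : ℝ} (hb : 0 ≤ b) (hba : b ≤ a) (hs₀ : 0 ≤ s)
    (hs₁ : s ≤ 1) : a ^ s - b ^ s ≤ (a - b) ^ s := by
  have := rpow_add_le_add_rpow (sub_nonneg.2 hba) hb hs₀ hs₁
  rw [sub_add_cancel] at this
  linarith

lemma rpow_sub_rpow_le_mul_sub {s a b : ℝ} (hb : 0 ≤ b) (hba : b ≤ a) (hs : 1 ≤ s) :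
    a ^ s - b ^ s ≤ s * a ^ (s - 1) * (a - b) := by
  rcases (hb.trans hba).eq_or_lt with ha | ha
  · obtain rfl : b = 0 := le_antisymm (ha ▸ hba) hb
    simp [← ha]
  have bernoulli := one_add_mul_self_le_rpow_one_add
    (show -1 ≤ b / a - 1 by linarith [div_nonneg hb ha.le]) hs
  rw [add_sub_cancel, div_rpow hb ha.le, le_div_iff₀ (rpow_pos_of_pos ha s)] at bernoulli
  have key : (1 + s * (b / a - 1)) * a ^ s = a ^ s - s * a ^ (s - 1) * (a - b) := by
    rw [rpow_sub_one ha.ne']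
    field_simp
    ring
  linarith

lemma rpow_sub_rpow_le_holder {s θ a b d : ℝ} (hθ₀ : 0 ≤ θ) (hθ₁ : θ ≤ 1) (hθs : θ ≤ s)
    (hb : 0 ≤ b) (hba : b ≤ a) (hd : a - b ≤ d) :
    a ^ s - b ^ s ≤ max s 1 * d ^ θ * a ^ (s - θ) := by
  have ha : 0 ≤ a := hb.trans hba
  have hab : 0 ≤ a - b := sub_nonneg.2 hba
  have hd₀ : 0 ≤ d := hab.trans hd
  rcases le_total s 1 with hs | hs
  · calc a ^ s - b ^ s ≤ (a - b) ^ s := rpow_sub_rpow_le_rpow_sub hb hba (hθ₀.trans hθs) hs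
      _ ≤ d ^ θ * a ^ (s - θ) := rpow_le_rpow_mul_rpow_sub hab hd (sub_le_self a hb) hθ₀ hθs
      _ ≤ max s 1 * d ^ θ * a ^ (s - θ) := by
        rw [mul_assoc]
        exact le_mul_of_one_le_left (by positivity) (le_max_right s 1)
  · calc a ^ s - b ^ s ≤ s * a ^ (s - 1) * (a - b) := rpow_sub_rpow_le_mul_sub hb hba hs
      _ ≤ s * a ^ (s - 1) * (d ^ θ * a ^ (1 - θ)) := by
        have := rpow_le_rpow_mul_rpow_sub hab hd (sub_le_self a hb) hθ₀ hθ₁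
        rw [rpow_one] at this
        gcongr
      _ = s * d ^ θ * a ^ (s - θ) := by
        rw [show s - θ = (s - 1) + (1 - θ) by ring,
          rpow_add_of_nonneg ha (by linarith) (by linarith)]
        ring
      _ = max s 1 * d ^ θ * a ^ (s - θ) := by rw [max_eq_left hs]

lemma abs_rpow_sub_rpow_le_holder {s θ a b d : ℝ} (hθ₀ : 0 ≤ θ) (hθ₁ : θ ≤ 1) (hθs : θ ≤ s)
    (ha : 0 ≤ a) (hb : 0 ≤ b) (hd : |a - b| ≤ d) :
    |a ^ s - b ^ s| ≤ max s 1 * d ^ θ * (a ^ (s - θ) + b ^ (s - θ)) := by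
  have := rpow_nonneg ha (s - θ)
  have := rpow_nonneg hb (s - θ)
  have : 0 ≤ max s 1 * d ^ θ := by
    have := (abs_nonneg _).trans hd
    positivity
  rcases le_total b a with hba | hab
  · rw [abs_of_nonneg (sub_nonneg.2 (rpow_le_rpow hb hba (hθ₀.trans hθs)))]
    have := rpow_sub_rpow_le_holder hθ₀ hθ₁ hθs hb hba ((le_abs_self _).trans hd)
    nlinarith
  · rw [abs_of_nonpos (sub_nonpos.2 (rpow_le_rpow ha hab (hθ₀.trans hθs))), neg_sub]
    have := rpow_sub_rpow_le_holder hθ₀ hθ₁ hθs ha hab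
      ((le_abs_self _).trans (abs_sub_comm a b ▸ hd))
    nlinarith

end Real

namespace NormedSpace

variable {V : Type*} [NormedAddCommGroup V] [NormedSpace ℝ V]

lemma norm_normalize_le (x : V) : ‖normalize x‖ ≤ 1 := by
  by_cases hx : x = 0
  · simp [hx]
  · exact (norm_normalize hx).le

lemma norm_mul_norm_normalize_sub_le (x y : V) :
    ‖x‖ * ‖normalize x - normalize y‖ ≤ 2 * ‖x - y‖ := by
  have decomp : ‖x‖ • (normalize x - normalize y) = (x - y) + (‖y‖ - ‖x‖) • normalize y := by
    rw [smul_sub, sub_smul, norm_smul_normalize, norm_smul_normalize]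
    abel
  have h := congrArg norm decomp
  rw [norm_smul, norm_norm] at h
  calc ‖x‖ * ‖normalize x - normalize y‖
      ≤ ‖x - y‖ + ‖(‖y‖ - ‖x‖) • normalize y‖ := h ▸ norm_add_le _ _
    _ ≤ ‖x - y‖ + ‖x - y‖ * 1 := by
      rw [norm_smul, Real.norm_eq_abs, abs_sub_comm]
      gcongr
      · exact abs_norm_sub_norm_le x y
      · exact norm_normalize_le y
    _ = 2 * ‖x - y‖ := by ring

lemma rpow_norm_mul_norm_normalize_sub_le {s θ : ℝ} (hs : 0 < s) (hθ₀ : 0 ≤ θ) (hθ₁ : θ ≤ 1)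
    (x y : V) :
    ‖x‖ ^ s * ‖normalize x - normalize y‖ ≤ 2 * ‖x - y‖ ^ θ * ‖x‖ ^ (s - θ) := by
  rcases eq_or_ne x 0 with rfl | hx
  · rw [norm_zero, Real.zero_rpow hs.ne', zero_mul]
    positivity
  have ha : 0 < ‖x‖ := norm_pos_iff.2 hx
  set e := ‖normalize x - normalize y‖
  have he : e ≤ 2 :=
    (norm_sub_le _ _).trans (by linarith [norm_normalize_le x, norm_normalize_le y])
  have hsplit : ‖x‖ * e / 2 ≤ ‖x - y‖ ^ θ * ‖x‖ ^ (1 - θ) := by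
    have hxy := norm_mul_norm_normalize_sub_le x y
    have := Real.rpow_le_rpow_mul_rpow_sub (r := 1) (show 0 ≤ ‖x‖ * e / 2 by positivity)
      (show _ ≤ ‖x - y‖ by linarith) (show _ ≤ ‖x‖ by nlinarith) hθ₀ hθ₁
    rwa [Real.rpow_one] at this
  calc ‖x‖ ^ s * e = 2 * ‖x‖ ^ (s - 1) * (‖x‖ * e / 2) := by
        rw [Real.rpow_sub_one ha.ne']
        field_simp
    _ ≤ 2 * ‖x‖ ^ (s - 1) * (‖x - y‖ ^ θ * ‖x‖ ^ (1 - θ)) := by gcongr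
    _ = 2 * ‖x - y‖ ^ θ * ‖x‖ ^ (s - θ) := by
        rw [show s - θ = (s - 1) + (1 - θ) by ring, Real.rpow_add ha]
        ring

end NormedSpace

lemma ofReal_rpow_sub_two_mul_sq (s : ℝ) (z : ℂ) :
    ((‖z‖ ^ (s - 2) : ℝ) : ℂ) * z ^ 2 = ((‖z‖ ^ s : ℝ) : ℂ) * NormedSpace.normalize z ^ 2 := by
  rcases eq_or_ne z 0 with rfl | hz
  · simp
  have ha : 0 < ‖z‖ := norm_pos_iff.2 hz
  rw [NormedSpace.normalize, Complex.real_smul, Real.rpow_sub ha, Real.rpow_two]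
  push_cast
  field_simp

lemma norm_rpow_sub_two_mul_sq_sub_le {s θ : ℝ} (hs : 0 < s) (hθ₀ : 0 ≤ θ) (hθ₁ : θ ≤ 1)
    (hθs : θ ≤ s) (z w : ℂ) :
    ‖((‖z‖ ^ (s - 2) : ℝ) : ℂ) * z ^ 2 - ((‖w‖ ^ (s - 2) : ℝ) : ℂ) * w ^ 2‖ ≤
      (max s 1 + 2) * ‖z - w‖ ^ θ * (‖z‖ ^ (s - θ) + ‖w‖ ^ (s - θ)) := by
  rw [ofReal_rpow_sub_two_mul_sq, ofReal_rpow_sub_two_mul_sq]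
  set ζ := NormedSpace.normalize z
  set ω := NormedSpace.normalize w
  set A := ‖z‖ ^ s
  set B := ‖w‖ ^ s
  have hζ : ‖ζ‖ ≤ 1 := NormedSpace.norm_normalize_le z
  have hω : ‖ω‖ ≤ 1 := NormedSpace.norm_normalize_le w
  have hsum : ‖(ζ ^ 2 + ω ^ 2) / 2‖ ≤ 1 := by
    rw [norm_div, Complex.norm_two, div_le_one two_pos]
    refine (norm_add_le _ _).trans ?_
    rw [norm_pow, norm_pow]
    nlinarith [norm_nonneg ζ, norm_nonneg ω]
  have hmid : ‖(ζ + ω) / 2‖ ≤ 1 := by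
    rw [norm_div, Complex.norm_two, div_le_one two_pos]
    linarith [norm_add_le ζ ω]
  -- splitting symmetrically in `z, w` avoids assuming `‖w‖ ≤ ‖z‖`
  have decomp : (A : ℂ) * ζ ^ 2 - B * ω ^ 2 = ((A - B : ℝ) : ℂ) * ((ζ ^ 2 + ω ^ 2) / 2)
      + ((A : ℂ) * (ζ - ω) + (B : ℂ) * -(ω - ζ)) * ((ζ + ω) / 2) := by
    push_cast
    ring
  have hA : 0 ≤ A := by positivity
  have hB : 0 ≤ B := by positivity
  calc ‖(A : ℂ) * ζ ^ 2 - B * ω ^ 2‖ ≤ |A - B| + (A * ‖ζ - ω‖ + B * ‖ω - ζ‖) := by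
        rw [decomp]
        refine (norm_add_le _ _).trans (add_le_add ?_ ?_)
        · rw [norm_mul, Complex.norm_real, Real.norm_eq_abs]
          exact mul_le_of_le_one_right (abs_nonneg _) hsum
        · rw [norm_mul]
          refine (mul_le_of_le_one_right (norm_nonneg _) hmid).trans ?_
          refine (norm_add_le _ _).trans ?_
          rw [norm_mul, norm_mul, norm_neg, Complex.norm_real, Complex.norm_real,
            Real.norm_of_nonneg hA, Real.norm_of_nonneg hB]
    _ ≤ max s 1 * ‖z - w‖ ^ θ * (‖z‖ ^ (s - θ) + ‖w‖ ^ (s - θ))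
        + (2 * ‖z - w‖ ^ θ * ‖z‖ ^ (s - θ) + 2 * ‖z - w‖ ^ θ * ‖w‖ ^ (s - θ)) := by
      have angular_w := NormedSpace.rpow_norm_mul_norm_normalize_sub_le hs hθ₀ hθ₁ w z
      rw [norm_sub_rev w z] at angular_w
      exact add_le_add
        (Real.abs_rpow_sub_rpow_le_holder hθ₀ hθ₁ hθs (norm_nonneg z) (norm_nonneg w)
          (abs_norm_sub_norm_le z w))
        (add_le_add (NormedSpace.rpow_norm_mul_norm_normalize_sub_le hs hθ₀ hθ₁ z w) angular_w)
    _ = (max s 1 + 2) * ‖z - w‖ ^ θ * (‖z‖ ^ (s - θ) + ‖w‖ ^ (s - θ)) := by ring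

lemma fderivDist_le_add (p : ℝ) (z w : ℂ) :
    FderivDist p z w ≤ ‖Fz p z - Fz p w‖ + ‖Fzbar p z - Fzbar p w‖ := by
  rw [FderivDist, Real.sqrt_le_left (by positivity)]
  nlinarith [norm_nonneg (Fz p z - Fz p w), norm_nonneg (Fzbar p z - Fzbar p w)]

lemma norm_fz_sub_fz (p : ℝ) (hp : -1 ≤ p) (z w : ℂ) :
    ‖Fz p z - Fz p w‖ = (p + 1) / 2 * |‖z‖ ^ (p - 1) - ‖w‖ ^ (p - 1)| := by
  rw [Fz, Fz, ← Complex.ofReal_sub, Complex.norm_real, Real.norm_eq_abs, ← mul_sub, abs_mul,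
    abs_of_nonneg (by linarith)]

lemma norm_fzbar_sub_fzbar (p : ℝ) (hp : 1 ≤ p) (z w : ℂ) :
    ‖Fzbar p z - Fzbar p w‖ = (p - 1) / 2 *
      ‖((‖z‖ ^ (p - 1 - 2) : ℝ) : ℂ) * z ^ 2 - ((‖w‖ ^ (p - 1 - 2) : ℝ) : ℂ) * w ^ 2‖ := by
  rw [Fzbar, Fzbar, show p - 1 - 2 = p - 3 by ring, Complex.ofReal_mul, Complex.ofReal_mul,
    mul_assoc, mul_assoc, ← mul_sub, norm_mul, Complex.norm_real, Real.norm_of_nonneg (by linarith)]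

/-- Hölder continuity of `F'` for `F(z) = |z|^(p-1) z`, `p > 1`, with `θ = min (p-1) 1`:
`|F'(z) - F'(w)| ≤ C |z - w|^θ (|z|^(p-1-θ) + |w|^(p-1-θ))`. -/
theorem holder_continuity_of_F_deriv (p : ℝ) (hp : 1 < p) :
    ∃ C : ℝ, 0 < C ∧ ∀ z w : ℂ,
      FderivDist p z w ≤
        C * ‖z - w‖ ^ min (p - 1) 1 *
          (‖z‖ ^ (p - 1 - min (p - 1) 1) +
            ‖w‖ ^ (p - 1 - min (p - 1) 1)) := by
  set θ := min (p - 1) 1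
  have hθ₀ : 0 ≤ θ := le_min (by linarith) zero_le_one
  have hθ₁ : θ ≤ 1 := min_le_right _ _
  have hθs : θ ≤ p - 1 := min_le_left _ _
  refine ⟨p * max (p - 1) 1 + (p - 1), by positivity, fun z w => ?_⟩
  set H := ‖z - w‖ ^ θ * (‖z‖ ^ (p - 1 - θ) + ‖w‖ ^ (p - 1 - θ))
  have radial : |‖z‖ ^ (p - 1) - ‖w‖ ^ (p - 1)| ≤ max (p - 1) 1 * H := by
    rw [← mul_assoc]
    exact Real.abs_rpow_sub_rpow_le_holder hθ₀ hθ₁ hθs (norm_nonneg z) (norm_nonneg w)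
      (abs_norm_sub_norm_le z w)
  have angular := norm_rpow_sub_two_mul_sq_sub_le (by linarith) hθ₀ hθ₁ hθs z w
  rw [mul_assoc] at angular
  calc FderivDist p z w ≤ ‖Fz p z - Fz p w‖ + ‖Fzbar p z - Fzbar p w‖ := fderivDist_le_add p z w
    _ ≤ (p + 1) / 2 * (max (p - 1) 1 * H) + (p - 1) / 2 * ((max (p - 1) 1 + 2) * H) := by
      rw [norm_fz_sub_fz p (by linarith), norm_fzbar_sub_fzbar p hp.le]
      gcongr
    _ = (p * max (p - 1) 1 + (p - 1)) * H := by ring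
    _ = _ := by rw [mul_assoc]
end
end

section
/- Let n ≥ 1 and p > 1 satisfy the H¹-subcritical condition 1/(p-1) > (n-2)/4. Then there exist real exponents q₀, r₀, q₁, r₁ ∈ (2, ∞) and β ∈ (0, 1) such that: (i) 2/q₁ + n/r₁ = n/2; (ii) 2/q₀ + n/r₀ = (n-2)/2 + β; (iii) 1/r₁ + (p-1)/r₀ = 1 - 1/r₁; (iv) 1/q₁ + (p-1)/q₀ < 1 - 1/q₁; and (v) r₀ > p + 1. -/
set_option maxHeartbeats 2000000 in
/-- Lemma 3.1 (choice of Strichartz exponents): if `n ≥ 1` and `p > 1` satisfy the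
`H¹`-subcritical condition `1/(p-1) > (n-2)/4`, then there exist exponents
`q₀, r₀, q₁, r₁ ∈ (2, ∞)` and `β ∈ (0,1)` with the stated scaling and Hölder relations. -/
theorem exists_strichartz_exponents (n : ℕ) (hn : 1 ≤ n) (p : ℝ) (hp : 1 < p)
    (hsub : 1 / (p - 1) > ((n : ℝ) - 2) / 4) :
    ∃ q₀ r₀ q₁ r₁ β : ℝ,
      2 < q₀ ∧ 2 < r₀ ∧ 2 < q₁ ∧ 2 < r₁ ∧ 0 < β ∧ β < 1 ∧
      2 / q₁ + n / r₁ = n / 2 ∧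
      2 / q₀ + n / r₀ = ((n : ℝ) - 2) / 2 + β ∧
      1 / r₁ + (p - 1) / r₀ = 1 - 1 / r₁ ∧
      1 / q₁ + (p - 1) / q₀ < 1 - 1 / q₁ ∧
      r₀ > p + 1 := by
  obtain ⟨m, hm_def⟩ : ∃ m : ℝ, m = (n : ℝ) := ⟨_, rfl⟩
  rw [← hm_def] at hsub ⊢
  have hm : (1:ℝ) ≤ m := by rw [hm_def]; exact_mod_cast hn
  have hmpos : (0:ℝ) < m := by linarith
  have hp1 : (0:ℝ) < p - 1 := by linarith
  have hK : (m - 2) * (p - 1) < 4 := by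
    rw [gt_iff_lt, div_lt_div_iff₀ (by norm_num) hp1] at hsub
    linarith
  -- choose x = 1/r₀
  obtain ⟨x, hx0, hx1', hx2', hx3', hx4'⟩ :
      ∃ x : ℝ, 0 < x ∧ m - 4 < 2 * m * x ∧ x * (p + 1) < 1 ∧
        x * (m * (p - 1)) < 2 ∧ x * (p - 1) < 1 := by
    set Lx : ℝ := max 0 ((m - 4) / (2 * m)) with hLx_def
    set U : ℝ := min (1 / (p + 1)) (min (2 / (m * (p - 1))) (1 / (p - 1))) with hU_def
    have hLU : Lx < U := by
      have h1 : (m - 4) / (2 * m) < 1 / (p + 1) := by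
        rw [div_lt_div_iff₀ (by positivity) (by positivity)]
        nlinarith
      have h2 : (m - 4) / (2 * m) < 2 / (m * (p - 1)) := by
        rw [div_lt_div_iff₀ (by positivity) (by positivity)]
        nlinarith
      have h3 : (m - 4) / (2 * m) < 1 / (p - 1) := by
        rw [div_lt_div_iff₀ (by positivity) hp1]
        nlinarith
      apply max_lt
      · exact lt_min (by positivity) (lt_min (by positivity) (by positivity))
      · exact lt_min h1 (lt_min h2 h3)
    have hb0 : (0:ℝ) ≤ Lx := le_max_left _ _
    have hb1 : (m - 4) / (2 * m) ≤ Lx := le_max_right _ _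
    have hb2 : U ≤ 1 / (p + 1) := min_le_left _ _
    have hb3 : U ≤ 2 / (m * (p - 1)) := (min_le_right _ _).trans (min_le_left _ _)
    have hb4 : U ≤ 1 / (p - 1) := (min_le_right _ _).trans (min_le_right _ _)
    refine ⟨(Lx + U) / 2, by linarith, ?_, ?_, ?_, ?_⟩
    · have h : (m - 4) / (2 * m) < (Lx + U) / 2 := by linarith
      rw [div_lt_iff₀ (by positivity)] at h
      linarith
    · have h : (Lx + U) / 2 < 1 / (p + 1) := by linarith
      rw [lt_div_iff₀ (by positivity)] at h
      linarith
    · have h : (Lx + U) / 2 < 2 / (m * (p - 1)) := by linarith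
      rw [lt_div_iff₀ (by positivity)] at h
      linarith
    · have h : (Lx + U) / 2 < 1 / (p - 1) := by linarith
      rw [lt_div_iff₀ hp1] at h
      linarith
  have hxhalf : x < 1 / 2 := by nlinarith
  have hmx : m * x < m / 2 := by nlinarith [mul_lt_mul_of_pos_left hxhalf hmpos]
  -- choose β
  obtain ⟨β, hβ0, hβ1, hβa, hβb, hβc'⟩ :
      ∃ β : ℝ, 0 < β ∧ β < 1 ∧ m * x - (m - 2) / 2 < β ∧
        β < m * x + (4 - m) / 2 ∧ (β + (m - 2) / 2) * (p - 1) < 2 := by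
    set Lb : ℝ := max 0 (m * x - (m - 2) / 2) with hLb_def
    set Ub : ℝ := min 1 (min (m * x + (4 - m) / 2) (2 / (p - 1) - (m - 2) / 2)) with hUb_def
    have hc0 : 0 < 2 / (p - 1) - (m - 2) / 2 := by
      rw [sub_pos, div_lt_div_iff₀ (by norm_num) hp1]
      linarith
    have hcm : m * x < 2 / (p - 1) := by
      rw [lt_div_iff₀ hp1]; nlinarith
    have hLUb : Lb < Ub := by
      apply max_lt
      · exact lt_min one_pos (lt_min (by linarith) hc0)
      · refine lt_min (by linarith) (lt_min (by linarith) (by linarith))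
    have hb0 : (0:ℝ) ≤ Lb := le_max_left _ _
    have hb1 : m * x - (m - 2) / 2 ≤ Lb := le_max_right _ _
    have hb2 : Ub ≤ 1 := min_le_left _ _
    have hb3 : Ub ≤ m * x + (4 - m) / 2 := (min_le_right _ _).trans (min_le_left _ _)
    have hb4 : Ub ≤ 2 / (p - 1) - (m - 2) / 2 := (min_le_right _ _).trans (min_le_right _ _)
    refine ⟨(Lb + Ub) / 2, by linarith, by linarith, by linarith, by linarith, ?_⟩
    have h' : (Lb + Ub) / 2 + (m - 2) / 2 < 2 / (p - 1) := by linarith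
    rw [lt_div_iff₀ hp1] at h'
    linarith
  -- denominators
  have hd0 : 0 < (m - 2) / 2 + β - m * x := by linarith
  have hd1 : (m - 2) / 2 + β - m * x < 1 := by linarith
  have he0 : 0 < m * (p - 1) * x := by positivity
  have he2 : m * (p - 1) * x < 2 := by linarith [hx3']
  have hf0 : 0 < 1 - (p - 1) * x := by linarith [hx4']
  have hf1 : 1 - (p - 1) * x < 1 := by nlinarith [mul_pos hp1 hx0]
  refine ⟨2 / ((m - 2) / 2 + β - m * x), 1 / x, 4 / (m * (p - 1) * x), 2 / (1 - (p - 1) * x),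
    β, ?_, ?_, ?_, ?_, hβ0, hβ1, ?_, ?_, ?_, ?_, ?_⟩
  · rw [lt_div_iff₀ hd0]; linarith
  · rw [lt_div_iff₀ hx0]; linarith
  · rw [lt_div_iff₀ he0]; linarith
  · rw [lt_div_iff₀ hf0]; nlinarith
  · field_simp
    ring
  · field_simp
    ring
  · field_simp
    ring
  · rw [one_div_div, div_div_eq_mul_div]
    nlinarith
  · rw [gt_iff_lt, lt_div_iff₀ hx0]; linarith
end
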